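/- arXiv:2605.04195 — 4 statements merged into one kernel-verified Lean document; each statement's English description precedes it below -/
import Mathlib

section
/- Let p be an odd prime and Δ a cyclic group of order p^s with generator δ. Then the fixed subring ℤ_p[Δ]⁺ of the group algebra ℤ_p[Δ] under the involution inverting group-like elements is generated as a ℤ_p-algebra by the element [δ] + [δ⁻¹] - 2. -/
/-!
The Vieta–Lucas polynomials `C n` satisfy `C n (x + x⁻¹) = xⁿ + x⁻ⁿ`, so for a generator `δ`
every `[h] + [h⁻¹]` is a polynomial in `[δ] + [δ⁻¹]`. By linearity, `x + σ x` (with `σ` the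
involution) lies in the algebra generated by `[δ] + [δ⁻¹]` for every `x`; for an invariant `x`
this is `2x`, and `2` is a unit of `ℤ_p` because `p` is odd. Shifting the generator by the
scalar `2` does not change the algebra it generates.
-/

open Polynomial

theorem Polynomial.Chebyshev.C_eval_add_of_mul_eq_one {A : Type*} [CommRing A] {x y : A}
    (hxy : x * y = 1) (n : ℕ) : (Chebyshev.C A n).eval (x + y) = x ^ n + y ^ n := by
  induction n using Nat.twoStepInduction with
  | zero => simp [one_add_one_eq_two]
  | one => simp
  | more n ih₀ ih₁ =>
    push_cast at ih₁ ⊢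
    rw [Chebyshev.C_add_two, eval_sub, eval_mul, eval_X, ih₀, ih₁]
    linear_combination (x ^ n + y ^ n) * hxy

theorem Algebra.adjoin_singleton_sub_algebraMap {R A : Type*} [CommRing R] [Ring A] [Algebra R A]
    (x : A) (r : R) : Algebra.adjoin R {x - algebraMap R A r} = Algebra.adjoin R {x} := by
  apply le_antisymm <;> rw [Algebra.adjoin_le_iff, Set.singleton_subset_iff, SetLike.mem_coe]
  · exact sub_mem (Algebra.self_mem_adjoin_singleton R x) (Subalgebra.algebraMap_mem _ r)
  · simpa using add_mem (Algebra.self_mem_adjoin_singleton R (x - algebraMap R A r))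
      (Subalgebra.algebraMap_mem _ r)

theorem PadicInt.isUnit_two {p : ℕ} [Fact p.Prime] (hodd : Odd p) : IsUnit (2 : ℤ_[p]) := by
  have h : ‖((2 : ℕ) : ℤ_[p])‖ = 1 :=
    PadicInt.norm_natCast_eq_one_iff.2 (Nat.coprime_two_right.2 hodd)
  exact_mod_cast PadicInt.isUnit_iff.2 h

namespace MonoidAlgebra

variable {R G : Type*} [CommRing R] [CommGroup G]

theorem domCongr_inv_of (g : G) :
    domCongr R R (MulEquiv.inv G) (of R G g) = of R G g⁻¹ := by
  simp [of_apply]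

theorem of_add_of_inv_mem_adjoin {g h : G} (hh : h ∈ Subgroup.zpowers g) :
    of R G h + of R G h⁻¹ ∈ Algebra.adjoin R {of R G g + of R G g⁻¹} := by
  have hmul : of R G g * of R G g⁻¹ = 1 := by rw [← map_mul, mul_inv_cancel, map_one]
  have hpow (n : ℕ) :
      of R G g ^ n + of R G g⁻¹ ^ n ∈ Algebra.adjoin R {of R G g + of R G g⁻¹} := by
    simpa only [Chebyshev.aeval_C, Chebyshev.C_eval_add_of_mul_eq_one hmul] using
      aeval_mem_adjoin_singleton R (x := of R G g + of R G g⁻¹) (p := Chebyshev.C R n)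
  obtain ⟨k, rfl⟩ := Subgroup.mem_zpowers_iff.mp hh
  obtain ⟨n, rfl | rfl⟩ := Int.eq_nat_or_neg k
  · simpa [inv_pow] using hpow n
  · simpa [inv_pow, add_comm] using hpow n

theorem add_domCongr_inv_mem_adjoin {g : G} (hg : ∀ h : G, h ∈ Subgroup.zpowers g)
    (x : MonoidAlgebra R G) :
    x + domCongr R R (MulEquiv.inv G) x ∈ Algebra.adjoin R {of R G g + of R G g⁻¹} := by
  induction x using MonoidAlgebra.induction_on with
  | of h => rw [domCongr_inv_of]; exact of_add_of_inv_mem_adjoin (hg h)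
  | add x y hx hy =>
    rw [map_add, add_add_add_comm]; exact add_mem hx hy
  | smul r x hx => rw [map_smul, ← smul_add]; exact Subalgebra.smul_mem _ hx r

theorem adjoin_of_add_of_inv_eq_equalizer (h2 : IsUnit (2 : R)) {g : G}
    (hg : ∀ h : G, h ∈ Subgroup.zpowers g) :
    Algebra.adjoin R {of R G g + of R G g⁻¹} =
      AlgHom.equalizer (domCongr R R (MulEquiv.inv G)).toAlgHom (AlgHom.id R _) := by
  apply le_antisymm
  · rw [Algebra.adjoin_le_iff, Set.singleton_subset_iff]
    simp [add_comm]
  · intro x (hx : domCongr R R (MulEquiv.inv G) x = x)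
    have h2x := add_domCongr_inv_mem_adjoin (R := R) hg x
    rw [hx, ← two_smul R] at h2x
    rwa [← Subalgebra.mem_toSubmodule, Submodule.smul_mem_iff_of_isUnit _ h2] at h2x

end MonoidAlgebra

theorem stmt_1_general (p : ℕ) [Fact p.Prime] (hodd : Odd p)
    (Δ : Type) [CommGroup Δ]
    (δ : Δ) (hδ : ∀ x : Δ, x ∈ Subgroup.zpowers δ) :
    Algebra.adjoin (PadicInt p)
        {MonoidAlgebra.of (PadicInt p) Δ δ + MonoidAlgebra.of (PadicInt p) Δ δ⁻¹ - 2}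
      = AlgHom.equalizer
          (MonoidAlgebra.domCongr (PadicInt p) (PadicInt p) (MulEquiv.inv Δ)).toAlgHom
          (AlgHom.id (PadicInt p) (MonoidAlgebra (PadicInt p) Δ)) := by
  rw [← map_ofNat (algebraMap (PadicInt p) (MonoidAlgebra (PadicInt p) Δ)) 2,
    Algebra.adjoin_singleton_sub_algebraMap]
  exact MonoidAlgebra.adjoin_of_add_of_inv_eq_equalizer (PadicInt.isUnit_two hodd) hδ

/-- For `p` an odd prime and `Δ` a cyclic group of order `p^s` with generator `δ`, the fixed
subring `ℤ_p[Δ]⁺` of the group algebra `ℤ_p[Δ]` under the involution inverting group-like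
elements is generated as a `ℤ_p`-algebra by `[δ] + [δ⁻¹] - 2`. -/
theorem stmt_1 (p : ℕ) [Fact p.Prime] (hodd : Odd p) (s : ℕ) (hs : 1 ≤ s)
    (Δ : Type) [CommGroup Δ] [Fintype Δ] (hcard : Fintype.card Δ = p ^ s)
    (δ : Δ) (hδ : ∀ x : Δ, x ∈ Subgroup.zpowers δ) :
    Algebra.adjoin (PadicInt p)
        {MonoidAlgebra.of (PadicInt p) Δ δ + MonoidAlgebra.of (PadicInt p) Δ δ⁻¹ - 2}
      = AlgHom.equalizer
          (MonoidAlgebra.domCongr (PadicInt p) (PadicInt p) (MulEquiv.inv Δ)).toAlgHom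
          (AlgHom.id (PadicInt p) (MonoidAlgebra (PadicInt p) Δ)) :=
  stmt_1_general p hodd Δ δ hδ
end

section
/- Let N be prime and p ≥ 5 with p dividing N-1, and let s = v_p(N-1). In the power series ring ℤ_p⟦λ - 1⟧, the elements (λ^{N+1} - 1)/(λ - 1) and (λ^{N-1} - 1)/(λ^{p^s} - 1) are units. -/
/-!
Both quotients are geometric sums `∑_{i<n} aⁱ` with `a ≡ 1` modulo `X`: for the first `a = λ` and
`n = N + 1`, for the second `a = λ^{p^s}` and `n = (N - 1)/p^s`. Such a sum has constant
coefficient `n`, so it is a unit as soon as `p ∤ n`; this holds for `N + 1` because `p ∣ N - 1`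
and `p > 2`, and for `(N - 1)/p^s` by the choice of `s`.
-/

open PowerSeries Finset

theorem PadicInt.isUnit_natCast_of_not_dvd {p : ℕ} [Fact p.Prime] {n : ℕ} (h : ¬p ∣ n) :
    IsUnit (n : ℤ_[p]) :=
  PadicInt.isUnit_iff.mpr <| PadicInt.norm_natCast_eq_one_iff.mpr <|
    (Nat.Prime.coprime_iff_not_dvd Fact.out).mpr h

theorem PowerSeries.exists_isUnit_mul_sub_one_eq_pow_sub_one {R : Type*} [CommRing R]
    {a : R⟦X⟧} (ha : constantCoeff a = 1) {n : ℕ} (hn : IsUnit (n : R)) :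
    ∃ u : R⟦X⟧, IsUnit u ∧ (a - 1) * u = a ^ n - 1 := by
  refine ⟨∑ i ∈ range n, a ^ i, ?_, by rw [mul_comm, geom_sum_mul]⟩
  rw [PowerSeries.isUnit_iff_constantCoeff, map_sum]
  simpa [ha] using hn

theorem Nat.not_dvd_add_one_of_dvd_sub_one {p N : ℕ} (hp : 3 ≤ p) (h : p ∣ N - 1) :
    ¬p ∣ N + 1 := by
  intro h'
  have hle := Nat.le_of_dvd (by omega) (Nat.dvd_sub h' h)
  omega

theorem Nat.exists_eq_pow_padicValNat_mul_not_dvd {p n : ℕ} [Fact p.Prime] (hn : n ≠ 0) :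
    ∃ m, n = p ^ padicValNat p n * m ∧ ¬p ∣ m := by
  obtain ⟨m, hm⟩ := pow_padicValNat_dvd (p := p) (n := n)
  refine ⟨m, hm, fun ⟨k, hk⟩ => pow_succ_padicValNat_not_dvd (p := p) hn ⟨k, ?_⟩⟩
  rw [pow_succ, mul_assoc, ← hk, ← hm]

/-- In `ℤ_p⟦λ - 1⟧` (modelled as power series in `T = λ - 1`, with `λ = 1 + T`), the
quotients `(λ^{N+1} - 1)/(λ - 1)` and `(λ^{N-1} - 1)/(λ^{p^s} - 1)` exist and are units,
where `N` is prime, `p ≥ 5` is prime with `p ∣ N - 1`, and `s = v_p(N - 1)`. -/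
theorem stmt_3 (p N : ℕ) [Fact p.Prime] (hN : N.Prime) (hp5 : 5 ≤ p)
    (hdvd : p ∣ N - 1) (s : ℕ) (hs : s = padicValNat p (N - 1)) :
    ∃ u w : PowerSeries (PadicInt p),
      IsUnit u ∧ IsUnit w ∧
      ((1 + PowerSeries.X : PowerSeries (PadicInt p)) - 1) * u
          = (1 + PowerSeries.X) ^ (N + 1) - 1 ∧
      ((1 + PowerSeries.X : PowerSeries (PadicInt p)) ^ (p ^ s) - 1) * w
          = (1 + PowerSeries.X) ^ (N - 1) - 1 := by
  obtain ⟨u, hu, hu_mul⟩ := exists_isUnit_mul_sub_one_eq_pow_sub_one (a := 1 + X)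
    (by simp) (PadicInt.isUnit_natCast_of_not_dvd
      (Nat.not_dvd_add_one_of_dvd_sub_one (by omega) hdvd))
  obtain ⟨m, hm, hpm⟩ :=
    Nat.exists_eq_pow_padicValNat_mul_not_dvd (p := p) (n := N - 1) (by have := hN.two_le; omega)
  obtain ⟨w, hw, hw_mul⟩ := exists_isUnit_mul_sub_one_eq_pow_sub_one (a := (1 + X) ^ p ^ s)
    (by simp) (PadicInt.isUnit_natCast_of_not_dvd hpm)
  refine ⟨u, w, hu, hw, hu_mul, ?_⟩
  rw [hw_mul, ← pow_mul, hs, ← hm]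
end

section
/- Let p ≥ 5, s ≥ 1, 1 ≤ t ≤ s, ζ a primitive p^t-th root of unity, and set R = ℤ_p[ζ + ζ⁻¹], a discrete valuation ring with uniformizer ζ + ζ⁻¹ - 2. Let H(X,Y) = Σ_{i=0}^{r-1} Σ_j c_{i,j} X^i Y^j ∈ ℤ_p[X,Y] with r ≥ 2, such that c_{r-1,0} ∈ ℤ_p^× and c_{i,0} ∈ pℤ_p for 0 ≤ i ≤ r-2. Then H(X, ζ + ζ⁻¹ - 2), viewed in R[X], is (a unit multiple of) a distinguished polynomial of degree r-1. Moreover, if c_{0,1} ∈ ℤ_p^×, then H(X, ζ + ζ⁻¹ - 2) is an Eisenstein polynomial over R. -/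
/-!
Write `p = 2m + 1` and let `ξ = ζ ^ p^(t-1)`, a primitive `p`-th root of unity. Pairing `ξ^k`
with `ξ^(-k)` in `p = ∏_{0<k<p} (1 - ξ^k)` gives `p = ∏_{k=1}^{m} (2 - ξ^k - ξ^(-k))`. Since the
Dickson polynomial `D_n` satisfies `D_n(x + x⁻¹) = x^n + x^(-n)` and `D_n(2) = 2`, each factor is
`2 - D_n(w + 2)` for some `n`, which `w` divides inside `A` itself; hence `w^m ∣ p` with `m ≥ 2`.
So `c_{i,0} ≡ 0 mod w²` for `i < r - 1`, the coefficient of `X^(r-1)` is a unit modulo `w`, and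
the constant term is `c_{0,1} w` modulo `w²`.
-/

open Finset Polynomial

lemma IsPrimitiveRoot.prod_two_sub_pow_add_inv_pow {K : Type*} [Field K] {ξ : K} {m : ℕ}
    (hξ : IsPrimitiveRoot ξ (2 * m + 1)) :
    ∏ k ∈ range m, (2 - (ξ ^ (k + 1) + ξ⁻¹ ^ (k + 1))) = 2 * m + 1 := by
  have hprod := hξ.prod_one_sub_pow_eq_order
  have hξ0 : ξ ≠ 0 := hξ.ne_zero (by omega)
  have hreflect :
      ∏ k ∈ range m, (1 - ξ ^ (m + k + 1)) = ∏ k ∈ range m, (1 - ξ⁻¹ ^ (k + 1)) := by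
    rw [← prod_range_reflect]
    refine prod_congr rfl fun k hk => ?_
    have hk := mem_range.1 hk
    rw [inv_pow, eq_inv_of_mul_eq_one_left (a := ξ ^ (m + (m - 1 - k) + 1))]
    rw [← pow_add, show m + (m - 1 - k) + 1 + (k + 1) = 2 * m + 1 by omega, hξ.pow_eq_one]
  rw [two_mul, prod_range_add, hreflect, ← prod_mul_distrib] at hprod
  push_cast at hprod
  rw [two_mul, ← hprod]
  refine prod_congr rfl fun k _ => ?_
  have : ξ ^ (k + 1) * ξ⁻¹ ^ (k + 1) = 1 := by rw [← mul_pow, mul_inv_cancel₀ hξ0, one_pow]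
  linear_combination -this

lemma dvd_dickson_eval_add_two_sub_two {A : Type*} [CommRing A] (w : A) (n : ℕ) :
    w ∣ (dickson 1 (1 : A) n).eval (w + 2) - 2 := by
  have h2 : (dickson 1 (1 : A) n).eval 2 = 2 := by
    simpa [one_add_one_eq_two] using dickson_one_one_eval_add_inv (1 : A) 1 (one_mul 1) n
  simpa [h2] using sub_dvd_eval_sub (w + 2) 2 (dickson 1 (1 : A) n)

lemma map_dickson_eval_add_two {A K : Type*} [CommRing A] [Field K] (f : A →+* K) {w : A}
    {ζ : K} (hζ : ζ ≠ 0) (hw : f w = ζ + ζ⁻¹ - 2) (n : ℕ) :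
    f ((dickson 1 (1 : A) n).eval (w + 2)) = ζ ^ n + ζ⁻¹ ^ n := by
  rw [← Polynomial.eval_map_apply, map_dickson, map_add, hw, map_one, map_ofNat, sub_add_cancel,
    dickson_one_one_eval_add_inv _ _ (mul_inv_cancel₀ hζ)]

theorem pow_half_dvd_of_isPrimitiveRoot {A K : Type*} [CommRing A] [Field K] (f : A →+* K)
    (hf : Function.Injective f) {w : A} {ζ : K} {n q : ℕ} (hζ0 : ζ ≠ 0)
    (hζ : IsPrimitiveRoot (ζ ^ q) n) (hn : Odd n) (hw : f w = ζ + ζ⁻¹ - 2) :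
    w ^ (n / 2) ∣ (n : A) := by
  obtain ⟨m, rfl⟩ := hn
  have hprod : ((2 * m + 1 : ℕ) : A) =
      ∏ k ∈ range m, (2 - (dickson 1 (1 : A) ((k + 1) * q)).eval (w + 2)) := by
    apply hf
    simp only [map_natCast, map_prod, map_sub, map_ofNat, map_dickson_eval_add_two f hζ0 hw]
    push_cast
    rw [← hζ.prod_two_sub_pow_add_inv_pow]
    refine prod_congr rfl fun k _ => ?_
    rw [← inv_pow, ← pow_mul, ← pow_mul, mul_comm q]
  rw [hprod, show (2 * m + 1) / 2 = #(range m) by simp; omega, ← prod_const]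
  exact prod_dvd_prod_of_dvd _ _ fun k _ => by
    simpa using (dvd_dickson_eval_add_two_sub_two w ((k + 1) * q)).neg_right

section SumCMulXPow

variable {A : Type*} [CommRing A]

lemma pow_dvd_sum_range_mul_pow_sub (a : ℕ → A) (w : A) {k J : ℕ} (hkJ : k ≤ J) :
    w ^ k ∣ ∑ j ∈ range J, a j * w ^ j - ∑ j ∈ range k, a j * w ^ j := by
  rw [← sum_range_add_sum_Ico _ hkJ, add_sub_cancel_left]
  exact dvd_sum fun j hj => (pow_dvd_pow w (mem_Ico.1 hj).1).mul_left _

lemma coeff_sum_range_C_mul_X_pow (d : ℕ → A) (r m : ℕ) :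
    (∑ i ∈ range r, C (d i) * X ^ i).coeff m = if m < r then d m else 0 := by
  simp

lemma natDegree_sum_range_C_mul_X_pow {d : ℕ → A} {r : ℕ} (hr : 0 < r) (h : d (r - 1) ≠ 0) :
    (∑ i ∈ range r, C (d i) * X ^ i).natDegree = r - 1 := by
  refine natDegree_eq_of_le_of_coeff_ne_zero ?_ ?_
  · exact natDegree_le_iff_coeff_eq_zero.2 fun m hm => by
      rw [coeff_sum_range_C_mul_X_pow, if_neg (by omega)]
  · rwa [coeff_sum_range_C_mul_X_pow, if_pos (by omega)]

lemma leadingCoeff_sum_range_C_mul_X_pow {d : ℕ → A} {r : ℕ} (hr : 0 < r) (h : d (r - 1) ≠ 0) :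
    (∑ i ∈ range r, C (d i) * X ^ i).leadingCoeff = d (r - 1) := by
  rw [leadingCoeff, natDegree_sum_range_C_mul_X_pow hr h, coeff_sum_range_C_mul_X_pow,
    if_pos (by omega)]

end SumCMulXPow

lemma IsLocalRing.isUnit_of_dvd_sub {A : Type*} [CommRing A] [IsLocalRing A] {u x w : A}
    (hu : IsUnit u) (hw : ¬IsUnit w) (h : w ∣ x - u) : IsUnit x := by
  rw [← notMem_maximalIdeal] at hu ⊢
  intro hx
  have hxu : x - u ∈ maximalIdeal A := Ideal.mem_of_dvd _ h ((mem_maximalIdeal w).2 hw)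
  exact hu (by simpa using Ideal.sub_mem _ hx hxu)

lemma not_sq_dvd_of_sq_dvd_sub_unit_mul {A : Type*} [CommRing A] [IsDomain A] {u x w : A}
    (hw0 : w ≠ 0) (hw : ¬IsUnit w) (hu : IsUnit u) (h : w ^ 2 ∣ x - u * w) : ¬w ^ 2 ∣ x := by
  intro hx
  have : w ^ 2 ∣ w ^ 1 := by
    rw [pow_one, ← hu.dvd_mul_left]
    simpa using dvd_sub hx h
  exact absurd ((pow_dvd_pow_iff hw0 hw).1 this) (by norm_num)

theorem stmt_11_general (p : ℕ) [Fact p.Prime] (hp5 : 5 ≤ p) (t : ℕ) (ht1 : 1 ≤ t)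
    (K : Type) [Field K] [Algebra (PadicInt p) K]
    (ζ : K) (hζ : IsPrimitiveRoot ζ (p ^ t))
    (A : Subalgebra (PadicInt p) K)
    (hdvr : IsDiscreteValuationRing A)
    (w : A) (hw : (w : K) = ζ + ζ⁻¹ - 2) (hirr : Irreducible w)
    (r J : ℕ) (hr : 2 ≤ r) (hJ : 2 ≤ J)
    (c : ℕ → ℕ → PadicInt p)
    (htop : IsUnit (c (r - 1) 0))
    (hlow : ∀ i < r - 1, c i 0 ∈ Ideal.span {((p : ℕ) : PadicInt p)}) :
    (∑ i ∈ Finset.range r, Polynomial.C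
          (∑ j ∈ Finset.range J, algebraMap (PadicInt p) A (c i j) * w ^ j)
        * Polynomial.X ^ i : Polynomial A).natDegree = r - 1 ∧
    IsUnit (∑ i ∈ Finset.range r, Polynomial.C
          (∑ j ∈ Finset.range J, algebraMap (PadicInt p) A (c i j) * w ^ j)
        * Polynomial.X ^ i : Polynomial A).leadingCoeff ∧
    (∀ i < r - 1,
      (∑ i ∈ Finset.range r, Polynomial.C
            (∑ j ∈ Finset.range J, algebraMap (PadicInt p) A (c i j) * w ^ j)
          * Polynomial.X ^ i : Polynomial A).coeff i ∈ Ideal.span {w}) ∧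
    (IsUnit (c 0 1) →
      ((∑ i ∈ Finset.range r, Polynomial.C
            (∑ j ∈ Finset.range J, algebraMap (PadicInt p) A (c i j) * w ^ j)
          * Polynomial.X ^ i : Polynomial A).coeff 0 ∈ Ideal.span {w} ∧
       (∑ i ∈ Finset.range r, Polynomial.C
            (∑ j ∈ Finset.range J, algebraMap (PadicInt p) A (c i j) * w ^ j)
          * Polynomial.X ^ i : Polynomial A).coeff 0 ∉ (Ideal.span {w}) ^ 2)) := by
  set d : ℕ → A := fun i => ∑ j ∈ range J, algebraMap (PadicInt p) A (c i j) * w ^ j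
  have hwp : w ^ 2 ∣ (p : A) :=
    (pow_dvd_pow w (by omega)).trans <| pow_half_dvd_of_isPrimitiveRoot (algebraMap A K)
      Subtype.val_injective (hζ.ne_zero (by positivity))
      (hζ.pow (by positivity) (by rw [← pow_succ, Nat.sub_add_cancel ht1]))
      ((Fact.out : p.Prime).odd_of_ne_two (by omega)) hw
  have hc_low : ∀ i < r - 1, w ^ 2 ∣ algebraMap (PadicInt p) A (c i 0) := fun i hi => by
    obtain ⟨x, hx⟩ := Ideal.mem_span_singleton.1 (hlow i hi)
    rw [hx, map_mul, map_natCast]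
    exact hwp.mul_right _
  have hd1 (i : ℕ) : w ∣ d i - algebraMap (PadicInt p) A (c i 0) := by
    simpa using pow_dvd_sum_range_mul_pow_sub (algebraMap _ A <| c i ·) w (by omega : 1 ≤ J)
  have hd2 : w ^ 2 ∣ d 0 - (algebraMap (PadicInt p) A (c 0 0) +
      algebraMap (PadicInt p) A (c 0 1) * w) := by
    simpa [sum_range_succ] using pow_dvd_sum_range_mul_pow_sub (algebraMap _ A <| c 0 ·) w hJ
  have hd_low (i : ℕ) (hi : i < r - 1) : w ∣ d i := by
    simpa using dvd_add (hd1 i) ((dvd_pow_self w two_ne_zero).trans (hc_low i hi))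
  have hlead : IsUnit (d (r - 1)) :=
    IsLocalRing.isUnit_of_dvd_sub (htop.map (algebraMap _ A)) hirr.not_isUnit (hd1 _)
  simp only [Ideal.span_singleton_pow, Ideal.mem_span_singleton]
  rw [natDegree_sum_range_C_mul_X_pow (d := d) (by omega) hlead.ne_zero,
    leadingCoeff_sum_range_C_mul_X_pow (d := d) (by omega) hlead.ne_zero,
    coeff_sum_range_C_mul_X_pow d, if_pos (by omega : 0 < r)]
  refine ⟨rfl, hlead, fun i hi => ?_, fun hc01 => ⟨hd_low 0 (by omega), ?_⟩⟩
  · rw [coeff_sum_range_C_mul_X_pow d, if_pos (by omega)]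
    exact hd_low i hi
  · refine not_sq_dvd_of_sq_dvd_sub_unit_mul hirr.ne_zero hirr.not_isUnit
      (hc01.map (algebraMap _ A)) ?_
    convert dvd_add hd2 (hc_low 0 (by omega)) using 1
    ring

/-- Lemma 6.5: let `p ≥ 5`, `1 ≤ t ≤ s`, `ζ` a primitive `p^t`-th root of unity, and
`R = ℤ_p[ζ + ζ⁻¹]`, a DVR with uniformizer `w = ζ + ζ⁻¹ - 2`.  If
`H(X,Y) = Σ_{i<r} Σ_j c_{i,j} X^i Y^j` with `c_{r-1,0}` a unit and `c_{i,0} ∈ pℤ_p` for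
`i < r-1`, then `H(X, ζ + ζ⁻¹ - 2)` is (a unit multiple of) a distinguished polynomial of
degree `r - 1` over `R`; moreover if `c_{0,1}` is a unit, it is an Eisenstein polynomial
(constant term of valuation exactly 1). -/
theorem stmt_11 (p : ℕ) [Fact p.Prime] (hp5 : 5 ≤ p) (s t : ℕ) (ht1 : 1 ≤ t) (hts : t ≤ s)
    (K : Type) [Field K] [Algebra (PadicInt p) K]
    (ζ : K) (hζ : IsPrimitiveRoot ζ (p ^ t))
    (A : Subalgebra (PadicInt p) K) (hA : A = Algebra.adjoin (PadicInt p) {ζ + ζ⁻¹})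
    (hdvr : IsDiscreteValuationRing A)
    (w : A) (hw : (w : K) = ζ + ζ⁻¹ - 2) (hirr : Irreducible w)
    (r J : ℕ) (hr : 2 ≤ r) (hJ : 2 ≤ J)
    (c : ℕ → ℕ → PadicInt p)
    (htop : IsUnit (c (r - 1) 0))
    (hlow : ∀ i < r - 1, c i 0 ∈ Ideal.span {((p : ℕ) : PadicInt p)}) :
    (∑ i ∈ Finset.range r, Polynomial.C
          (∑ j ∈ Finset.range J, algebraMap (PadicInt p) A (c i j) * w ^ j)
        * Polynomial.X ^ i : Polynomial A).natDegree = r - 1 ∧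
    IsUnit (∑ i ∈ Finset.range r, Polynomial.C
          (∑ j ∈ Finset.range J, algebraMap (PadicInt p) A (c i j) * w ^ j)
        * Polynomial.X ^ i : Polynomial A).leadingCoeff ∧
    (∀ i < r - 1,
      (∑ i ∈ Finset.range r, Polynomial.C
            (∑ j ∈ Finset.range J, algebraMap (PadicInt p) A (c i j) * w ^ j)
          * Polynomial.X ^ i : Polynomial A).coeff i ∈ Ideal.span {w}) ∧
    (IsUnit (c 0 1) →
      ((∑ i ∈ Finset.range r, Polynomial.C
            (∑ j ∈ Finset.range J, algebraMap (PadicInt p) A (c i j) * w ^ j)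
          * Polynomial.X ^ i : Polynomial A).coeff 0 ∈ Ideal.span {w} ∧
       (∑ i ∈ Finset.range r, Polynomial.C
            (∑ j ∈ Finset.range J, algebraMap (PadicInt p) A (c i j) * w ^ j)
          * Polynomial.X ^ i : Polynomial A).coeff 0 ∉ (Ideal.span {w}) ^ 2)) :=
  stmt_11_general p hp5 t ht1 K ζ hζ A hdvr w hw hirr r J hr hJ c htop hlow
end

section
/- Let 𝒪 be a discrete valuation ring with valuation v, v(π) = 1 for a uniformizer π, and let H(X) ∈ 𝒪[X] be a monic polynomial of degree r-1 ≥ 3 whose non-leading coefficients all lie in the maximal ideal, and whose coefficient of X¹ has valuation exactly 1. Suppose H = h₁ ⋯ h_m is a factorization into monic irreducible polynomials in 𝒪[X]. If m ≥ 2, then m = 2, and exactly one factor has degree 1; the other factor is an Eisenstein polynomial of degree r-2. -/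
/-!
Reducing modulo `𝔪` turns `H` into `X ^ (r - 1)`, so every monic factor of `H` reduces to a
power of `X` and is again distinguished; in particular every `h k` has constant term in `𝔪`.
The `X`-coefficient of a product is `Σ_k d_k ∏_{l ≠ k} h_l(0)`, which lies in `𝔪²` as soon as
there are three factors, or two factors both of degree at least `2`. Since the
`X`-coefficient of `H` is not in `𝔪²`, this forces `H = h₀ h₁` with a linear factor, and the
same identity then shows that the constant term of the other factor is not in `𝔪²`.
-/

open Polynomial IsLocalRing

namespace Polynomial

variable {R : Type*} [CommRing R] {I : Ideal R}

theorem mul_coeff_one_mem_sq {p q : R[X]} (hp0 : p.coeff 0 ∈ I) (hq1 : q.coeff 1 ∈ I)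
    (h : p.coeff 1 * q.coeff 0 ∈ I ^ 2) : (p * q).coeff 1 ∈ I ^ 2 := by
  rw [mul_coeff_one]
  exact add_mem (pow_two I ▸ Ideal.mul_mem_mul hp0 hq1) h

theorem prod_range_coeff_one_mem_sq {h : ℕ → R[X]} {m : ℕ} (hm : 3 ≤ m)
    (h0 : ∀ k < m, (h k).coeff 0 ∈ I) : (∏ k ∈ Finset.range m, h k).coeff 1 ∈ I ^ 2 := by
  have hsplit : ∏ k ∈ Finset.range m, h k = (∏ k ∈ Finset.Ico 2 m, h k) * (h 0 * h 1) := by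
    rw [← Finset.prod_range_mul_prod_Ico _ (by omega : 2 ≤ m), mul_comm]
    simp [Finset.prod_range_succ]
  have htail0 : (∏ k ∈ Finset.Ico 2 m, h k).coeff 0 ∈ I := by
    rw [Finset.prod_eq_prod_Ico_succ_bot (by omega), mul_coeff_zero]
    exact Ideal.mul_mem_right _ _ (h0 2 (by omega))
  have hhead1 : (h 0 * h 1).coeff 1 ∈ I := by
    rw [mul_coeff_one]
    exact add_mem (Ideal.mul_mem_right _ _ (h0 0 (by omega)))
      (Ideal.mul_mem_left _ _ (h0 1 (by omega)))
  have hhead0 : (h 0 * h 1).coeff 0 ∈ I ^ 2 := by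
    rw [mul_coeff_zero, pow_two]
    exact Ideal.mul_mem_mul (h0 0 (by omega)) (h0 1 (by omega))
  rw [hsplit]
  exact mul_coeff_one_mem_sq htail0 hhead1 (Ideal.mul_mem_left _ _ hhead0)

namespace IsDistinguishedAt

theorem of_dvd [I.IsPrime] {f p : R[X]} (hf : f.IsDistinguishedAt I) (hp : p.Monic)
    (hpf : p ∣ f) : p.IsDistinguishedAt I := by
  have hdvd : p.map (Ideal.Quotient.mk I) ∣ X ^ f.natDegree :=
    hf.map_eq_X_pow ▸ Polynomial.map_dvd _ hpf
  obtain ⟨j, -, hj⟩ := (dvd_prime_pow prime_X _).1 hdvd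
  have hpj : p.map (Ideal.Quotient.mk I) = X ^ j :=
    eq_of_monic_of_associated (hp.map _) (monic_X_pow j) hj
  have hjdeg : j = p.natDegree := by
    simpa [hp.natDegree_map] using (congrArg natDegree hpj).symm
  refine ⟨⟨fun {n} hn => ?_⟩, hp⟩
  simpa [coeff_X_pow, hjdeg, hn.ne, Ideal.Quotient.eq_zero_iff_mem] using
    congrArg (coeff · n) hpj

theorem mul_coeff_one_mem_sq {p q : R[X]} (hp : p.IsDistinguishedAt I)
    (hq : q.IsDistinguishedAt I) (hp2 : 2 ≤ p.natDegree) (hq2 : 2 ≤ q.natDegree) :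
    (p * q).coeff 1 ∈ I ^ 2 :=
  Polynomial.mul_coeff_one_mem_sq (hp.mem (by omega)) (hq.mem hq2)
    (pow_two I ▸ Ideal.mul_mem_mul (hp.mem hp2) (hq.mem (by omega)))

theorem isEisensteinAt_of_mul {p q : R[X]} (hp : p.IsDistinguishedAt I)
    (hq : q.IsDistinguishedAt I) (hp1 : p.natDegree = 1) (hq2 : 2 ≤ q.natDegree)
    (hpq : (p * q).coeff 1 ∉ I ^ 2) : q.IsEisensteinAt I := by
  have hI : I ≠ ⊤ := by
    rintro rfl
    exact hpq (by simp [Ideal.top_pow])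
  refine ⟨?_, hq.mem, fun hq0 => hpq ?_⟩
  · rw [hq.monic.leadingCoeff]
    exact (Ideal.ne_top_iff_one I).1 hI
  · exact Polynomial.mul_coeff_one_mem_sq (hp.mem (by omega)) (hq.mem hq2)
      (Ideal.mul_mem_left _ _ hq0)

end IsDistinguishedAt

end Polynomial

theorem stmt_15_general (O : Type) [CommRing O] [IsDomain O] [IsDiscreteValuationRing O]
    (r : ℕ) (hr : 4 ≤ r)
    (H : Polynomial O) (hmonic : H.Monic) (hdeg : H.natDegree = r - 1)
    (hdist : ∀ i < r - 1, H.coeff i ∈ IsLocalRing.maximalIdeal O)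
    (hc1' : H.coeff 1 ∉ (IsLocalRing.maximalIdeal O) ^ 2)
    (m : ℕ) (h : ℕ → Polynomial O)
    (hmon : ∀ k < m, (h k).Monic) (hirr : ∀ k < m, Irreducible (h k))
    (hfac : H = ∏ k ∈ Finset.range m, h k) (hm : 2 ≤ m) :
    m = 2 ∧
      (((h 0).natDegree = 1 ∧ (h 1).natDegree = r - 2 ∧
          (∀ i < r - 2, (h 1).coeff i ∈ IsLocalRing.maximalIdeal O) ∧
          (h 1).coeff 0 ∉ (IsLocalRing.maximalIdeal O) ^ 2) ∨
       ((h 1).natDegree = 1 ∧ (h 0).natDegree = r - 2 ∧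
          (∀ i < r - 2, (h 0).coeff i ∈ IsLocalRing.maximalIdeal O) ∧
          (h 0).coeff 0 ∉ (IsLocalRing.maximalIdeal O) ^ 2)) := by
  have hH : H.IsDistinguishedAt (maximalIdeal O) := ⟨⟨fun hi => hdist _ (hdeg ▸ hi)⟩, hmonic⟩
  have hdistk : ∀ k < m, (h k).IsDistinguishedAt (maximalIdeal O) := fun k hk =>
    hH.of_dvd (hmon k hk) (hfac ▸ Finset.dvd_prod_of_mem _ (Finset.mem_range.2 hk))
  have hpos : ∀ k < m, 0 < (h k).natDegree := fun k hk =>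
    (hmon k hk).natDegree_pos_of_not_isUnit (hirr k hk).not_isUnit
  obtain rfl : m = 2 := le_antisymm (not_lt.1 fun hm3 => hc1' <| hfac ▸
    prod_range_coeff_one_mem_sq hm3 fun k hk => (hdistk k hk).mem (hpos k hk)) hm
  have hH01 : H = h 0 * h 1 := by simp [hfac, Finset.prod_range_succ]
  have hsum : (h 0).natDegree + (h 1).natDegree = r - 1 := by
    rw [← hdeg, hH01, (hmon 0 two_pos).natDegree_mul (hmon 1 one_lt_two)]
  have hd0 := hpos 0 two_pos
  have hd1 := hpos 1 one_lt_two
  refine ⟨rfl, ?_⟩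
  by_cases hlin : (h 0).natDegree = 1
  · have hE := (hdistk 0 two_pos).isEisensteinAt_of_mul (hdistk 1 one_lt_two) hlin
      (by omega) (hH01 ▸ hc1')
    exact Or.inl ⟨hlin, by omega, fun i hi => hE.mem (by omega), hE.notMem⟩
  · have hlin' : (h 1).natDegree = 1 := by
      by_contra hne
      exact hc1' (hH01 ▸ (hdistk 0 two_pos).mul_coeff_one_mem_sq (hdistk 1 one_lt_two)
        (by omega) (by omega))
    have hE := (hdistk 1 one_lt_two).isEisensteinAt_of_mul (hdistk 0 two_pos) hlin'
      (by omega) (mul_comm (h 0) (h 1) ▸ hH01 ▸ hc1')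
    exact Or.inr ⟨hlin', by omega, fun i hi => hE.mem (by omega), hE.notMem⟩

/-- Proposition 6.8 abstracted: over a DVR `𝒪`, let `H` be monic of degree `r - 1 ≥ 3`
with all non-leading coefficients in the maximal ideal, whose `X`-coefficient has
valuation exactly `1` (it lies in `𝔪` but not `𝔪²`).  If `H = h₀ ⋯ h_{m-1}` with each
`h_k` monic irreducible and `m ≥ 2`, then `m = 2`, exactly one factor has degree `1`, and
the other factor is an Eisenstein polynomial of degree `r - 2`. -/
theorem stmt_15 (O : Type) [CommRing O] [IsDomain O] [IsDiscreteValuationRing O]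
    (r : ℕ) (hr : 4 ≤ r)
    (H : Polynomial O) (hmonic : H.Monic) (hdeg : H.natDegree = r - 1)
    (hdist : ∀ i < r - 1, H.coeff i ∈ IsLocalRing.maximalIdeal O)
    (hc1 : H.coeff 1 ∈ IsLocalRing.maximalIdeal O)
    (hc1' : H.coeff 1 ∉ (IsLocalRing.maximalIdeal O) ^ 2)
    (m : ℕ) (h : ℕ → Polynomial O)
    (hmon : ∀ k < m, (h k).Monic) (hirr : ∀ k < m, Irreducible (h k))
    (hfac : H = ∏ k ∈ Finset.range m, h k) (hm : 2 ≤ m) :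
    m = 2 ∧
      (((h 0).natDegree = 1 ∧ (h 1).natDegree = r - 2 ∧
          (∀ i < r - 2, (h 1).coeff i ∈ IsLocalRing.maximalIdeal O) ∧
          (h 1).coeff 0 ∉ (IsLocalRing.maximalIdeal O) ^ 2) ∨
       ((h 1).natDegree = 1 ∧ (h 0).natDegree = r - 2 ∧
          (∀ i < r - 2, (h 0).coeff i ∈ IsLocalRing.maximalIdeal O) ∧
          (h 0).coeff 0 ∉ (IsLocalRing.maximalIdeal O) ^ 2)) :=
  stmt_15_general O r hr H hmonic hdeg hdist hc1' m h hmon hirr hfac hm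
end
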